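/- arXiv:1002.4059 — 4 statements merged into one kernel-verified Lean document; each statement's English description precedes it below -/
import Mathlib

section
/- Let Ω ⊂ ℝ² be a bounded open set which is Lipschitz with constants r and L. Then for every integer n ≥ 0, the one-dimensional Hausdorff measure of ∂Ω intersected with the closed annulus B̄_{(n+1)r} \ B_{nr} (centered at the origin) satisfies ℋ¹(∂Ω ∩ (B̄_{(n+1)r} \ B_{nr})) ≤ C(L) r (n+1), where one may take C(L) = 48 √(1+L²). -/
open MeasureTheory Metric Set

noncomputable section

abbrev E2 : Type := EuclideanSpace ℝ (Fin 2)

/-- A bounded open set `Ω ⊆ ℝ²` is Lipschitz with constants `r` and `L`: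
at every boundary point, after a rigid change of coordinates taking the point to the origin,
`Ω` coincides in the ball of radius `r` with the subgraph of an `L`-Lipschitz function
vanishing at `0`. -/
def IsLipDomain (r L : ℝ) (Ω : Set E2) : Prop :=
  ∀ x ∈ frontier Ω, ∃ (A : E2 ≃ᵢ E2) (φ : ℝ → ℝ),
    A x = 0 ∧ LipschitzWith (Real.toNNReal L) φ ∧ φ 0 = 0 ∧
    ∀ y ∈ ball x r, (y ∈ Ω ↔ (A y) 1 < φ ((A y) 0))

/-!
Near a boundary point `x`, the set `∂Ω ∩ B̄(x, r/2)` lies on the graph of an `L`-Lipschitz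
function over an interval of length `r`, so its length is at most `√(1 + L²) r`. A maximal
`r/2`-separated subset of the part of `∂Ω` in the annulus yields a cover by such balls; the balls
of radius `r/4` around its points are disjoint and lie in the annulus thickened by `r/4`, whose
area is at most `3 (n + 1) π r²`, so it has at most `48 (n + 1)` points.
-/

open scoped NNReal ENNReal

theorem frontier_inter_subset_of_mem_iff_lt {X : Type*} [TopologicalSpace X] {s U : Set X}
    {f g : X → ℝ} (hU : IsOpen U) (hf : Continuous f) (hg : Continuous g)
    (h : ∀ y ∈ U, y ∈ s ↔ f y < g y) : frontier s ∩ U ⊆ {y | f y = g y} := by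
  rintro y ⟨⟨hy_closure, hy_interior⟩, hyU⟩
  rcases lt_trichotomy (f y) (g y) with hlt | heq | hgt
  · have hU_sub : U ∩ {z | f z < g z} ⊆ s := fun z hz => (h z hz.1).2 hz.2
    exact absurd (interior_maximal hU_sub (hU.inter (isOpen_lt hf hg)) ⟨hyU, hlt⟩) hy_interior
  · exact heq
  · have hU_disj : Disjoint (U ∩ {z | g z < f z}) s :=
      disjoint_left.2 fun z hz hzs => ((h z hz.1).1 hzs).asymm hz.2
    exact absurd hy_closure <|
      (hU_disj.closure_right (hU.inter (isOpen_lt hg hf))).notMem_of_mem_left ⟨hyU, hgt⟩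

theorem LipschitzWith.lipschitzWith_graph {φ : ℝ → ℝ} {K : ℝ≥0} (hφ : LipschitzWith K φ) :
    LipschitzWith (NNReal.sqrt (1 + K ^ 2)) (fun t => !₂[t, φ t]) := by
  refine LipschitzWith.of_dist_le_mul fun s t => ?_
  have hφst : dist (φ s) (φ t) ≤ K * dist s t := hφ.dist_le_mul s t
  rw [EuclideanSpace.dist_eq, Fin.sum_univ_two, Real.coe_sqrt,
    ← Real.sqrt_sq (dist_nonneg (x := s)), ← Real.sqrt_mul (by positivity)]
  gcongr
  simp only [Matrix.cons_val_zero, Matrix.cons_val_one, Matrix.cons_val_fin_one,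
    NNReal.coe_add, NNReal.coe_one, NNReal.coe_pow]
  nlinarith [pow_le_pow_left₀ dist_nonneg hφst 2]

theorem LipschitzWith.hausdorffMeasure_graph_image_Icc_le {φ : ℝ → ℝ} {K : ℝ≥0}
    (hφ : LipschitzWith K φ) (a b : ℝ) :
    μH[1] ((fun t => !₂[t, φ t]) '' Icc a b) ≤ ENNReal.ofReal (√(1 + K ^ 2) * (b - a)) := by
  calc μH[1] ((fun t => !₂[t, φ t]) '' Icc a b)
      ≤ NNReal.sqrt (1 + K ^ 2) ^ (1 : ℝ) * μH[1] (Icc a b) :=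
        hφ.lipschitzWith_graph.lipschitzOnWith.hausdorffMeasure_image_le zero_le_one
    _ = ENNReal.ofReal (√(1 + K ^ 2) * (b - a)) := by
        rw [hausdorffMeasure_real, Real.volume_Icc, ENNReal.rpow_one,
          ENNReal.ofReal_mul (Real.sqrt_nonneg _), ← NNReal.coe_one, ← NNReal.coe_pow,
          ← NNReal.coe_add, ← Real.coe_sqrt, ENNReal.ofReal_coe_nnreal]

theorem IsLipDomain.hausdorffMeasure_frontier_inter_closedBall_le {r L ρ : ℝ} {Ω : Set E2}
    (hΩ : IsLipDomain r L Ω) {x : E2} (hx : x ∈ frontier Ω) (hρ₀ : 0 ≤ ρ) (hρ : ρ < r) :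
    μH[1] (frontier Ω ∩ closedBall x ρ) ≤ ENNReal.ofReal (2 * √(1 + L ^ 2) * ρ) := by
  obtain ⟨A, φ, hAx, hφ, -, hΩA⟩ := hΩ x hx
  have hgraph : frontier Ω ∩ ball x r ⊆ {y | A y 1 = φ (A y 0)} :=
    frontier_inter_subset_of_mem_iff_lt isOpen_ball (by fun_prop)
      (hφ.continuous.comp (by fun_prop)) hΩA
  have hsub : frontier Ω ∩ closedBall x ρ ⊆ A.symm '' ((fun t => !₂[t, φ t]) '' Icc (-ρ) ρ) := by
    rintro y ⟨hyΩ, hyρ⟩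
    have hy_graph : A y 1 = φ (A y 0) := hgraph ⟨hyΩ, closedBall_subset_ball hρ hyρ⟩
    have hy_abs : |A y 0| ≤ ρ := calc
      |A y 0| ≤ ‖A y‖ := PiLp.norm_apply_le (A y) 0
      _ = dist y x := by rw [← dist_zero_right, ← hAx, A.dist_eq]
      _ ≤ ρ := hyρ
    refine ⟨A y, ⟨A y 0, abs_le.1 hy_abs, ?_⟩, A.symm_apply_apply y⟩
    ext i
    fin_cases i <;> simp [hy_graph]
  have hL : √(1 + (L.toNNReal : ℝ) ^ 2) ≤ √(1 + L ^ 2) := by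
    refine Real.sqrt_le_sqrt (add_le_add_right ?_ 1)
    rw [Real.coe_toNNReal']
    rcases max_cases L 0 with ⟨h, -⟩ | ⟨h, -⟩ <;> simp [h, sq_nonneg]
  calc μH[1] (frontier Ω ∩ closedBall x ρ)
      ≤ μH[1] (A.symm '' ((fun t => !₂[t, φ t]) '' Icc (-ρ) ρ)) := measure_mono hsub
    _ = μH[1] ((fun t => !₂[t, φ t]) '' Icc (-ρ) ρ) := A.symm.hausdorffMeasure_image _ _
    _ ≤ ENNReal.ofReal (√(1 + (L.toNNReal : ℝ) ^ 2) * (ρ - -ρ)) :=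
        hφ.hausdorffMeasure_graph_image_Icc_le _ _
    _ ≤ ENNReal.ofReal (2 * √(1 + L ^ 2) * ρ) := by
        gcongr ENNReal.ofReal ?_
        nlinarith

namespace Metric

theorem packingNumber_le_of_forall_finset {X : Type*} [PseudoEMetricSpace X] {ε : ℝ≥0}
    {A : Set X} {N : ℕ}
    (h : ∀ S : Finset X, ↑S ⊆ A → IsSeparated ε (S : Set X) → S.card ≤ N) :
    packingNumber ε A ≤ N := by
  refine iSup₂_le fun C hCA => iSup_le fun hC => ?_
  by_contra! hlt
  obtain ⟨t, htC, ht⟩ := exists_subset_encard_eq (Order.add_one_le_of_lt hlt)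
  have ht_fin : t.Finite := finite_of_encard_eq_coe (k := N + 1) (by rw [ht]; norm_cast)
  have hcard := h ht_fin.toFinset (by simpa using htC.trans hCA) (by simpa using hC.subset htC)
  rw [ht_fin.encard_eq_coe_toFinset_card] at ht
  norm_cast at ht
  omega

theorem measure_le_packingNumber_mul {X : Type*} [PseudoMetricSpace X] [MeasurableSpace X]
    (μ : Measure X) {ε : ℝ≥0} {A : Set X} {c : ℝ≥0∞} (hA : packingNumber ε A ≠ ⊤)
    (h : ∀ x ∈ A, μ (A ∩ closedBall x ε) ≤ c) : μ A ≤ packingNumber ε A * c := by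
  set M := maximalSeparatedSet ε A
  have hM : M.Finite := encard_ne_top_iff.1 (by rwa [encard_maximalSeparatedSet hA])
  have hcover : A ⊆ ⋃ x ∈ hM.toFinset, A ∩ closedBall x ε := fun y hy => by
    obtain ⟨x, hxM, hyx⟩ :=
      mem_iUnion₂.1 ((isCover_maximalSeparatedSet hA).subset_iUnion_closedBall hy)
    exact mem_iUnion₂.2 ⟨x, hM.mem_toFinset.2 hxM, hy, hyx⟩
  calc μ A ≤ ∑ x ∈ hM.toFinset, μ (A ∩ closedBall x ε) :=
        (measure_mono hcover).trans (measure_biUnion_finset_le _ _)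
    _ ≤ ∑ _x ∈ hM.toFinset, c :=
        Finset.sum_le_sum fun x hx => h x (maximalSeparatedSet_subset (hM.mem_toFinset.1 hx))
    _ = packingNumber ε A * c := by
        rw [Finset.sum_const, nsmul_eq_mul, ← encard_maximalSeparatedSet hA,
          hM.encard_eq_coe_toFinset_card, ENat.toENNReal_coe]

end Metric

open Measure in
theorem Finset.card_mul_addHaar_ball_le_addHaar_thickening {E : Type*} [NormedAddCommGroup E]
    [MeasurableSpace E] [BorelSpace E] (μ : Measure E) [μ.IsAddHaarMeasure] {ε : ℝ≥0} {A : Set E}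
    {S : Finset E} (hSA : ↑S ⊆ A) (hS : IsSeparated ε (S : Set E)) :
    S.card * μ (ball 0 (ε / 2)) ≤ μ (thickening (ε / 2) A) := by
  have hdisj : (S : Set E).PairwiseDisjoint fun s => ball s (ε / 2) := fun s hs t ht hst => by
    refine ball_disjoint_ball ?_
    have : (ε : ℝ≥0∞) < edist s t := hS hs ht hst
    rw [edist_nndist, ENNReal.coe_lt_coe, ← NNReal.coe_lt_coe, coe_nndist] at this
    linarith
  calc S.card * μ (ball 0 (ε / 2)) = ∑ s ∈ S, μ (ball s (ε / 2)) := by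
        simp [addHaar_ball_center μ _ (ε / 2 : ℝ)]
    _ = μ (⋃ s ∈ S, ball s (ε / 2)) :=
        (measure_biUnion_finset hdisj fun _ _ => measurableSet_ball).symm
    _ ≤ μ (thickening (ε / 2) A) :=
        measure_mono <| iUnion₂_subset fun s hs => ball_subset_thickening (hSA hs) _

open Measure in
theorem addHaar_closedBall_diff_ball {E : Type*} [NormedAddCommGroup E] [NormedSpace ℝ E]
    [MeasurableSpace E] [BorelSpace E] [FiniteDimensional ℝ E] [Nontrivial E]
    (μ : Measure E) [μ.IsAddHaarMeasure] (x : E) {ρ R : ℝ} (hρR : max ρ 0 ≤ R) :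
    μ (closedBall x R \ ball x ρ) =
      ENNReal.ofReal (R ^ Module.finrank ℝ E - max ρ 0 ^ Module.finrank ℝ E) * μ (ball 0 1) := by
  have hball : ball x ρ = ball x (max ρ 0) := by
    rcases le_total ρ 0 with h | h
    · rw [ball_eq_empty.2 h, max_eq_right h, ball_zero]
    · rw [max_eq_left h]
  have hR : 0 ≤ R := (le_max_right ρ 0).trans hρR
  rw [hball, measure_sdiff (ball_subset_closedBall.trans (closedBall_subset_closedBall hρR))
      measurableSet_ball.nullMeasurableSet measure_ball_lt_top.ne,
    addHaar_closedBall μ x hR, addHaar_ball μ x (le_max_right ρ 0),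
    ← ENNReal.sub_mul fun _ _ => measure_ball_lt_top.ne, ← ENNReal.ofReal_sub _ (by positivity)]

theorem thickening_closedBall_diff_ball_subset {E : Type*} [SeminormedAddCommGroup E] (x : E)
    (δ ρ R : ℝ) :
    thickening δ (closedBall x R \ ball x ρ) ⊆ closedBall x (R + δ) \ ball x (ρ - δ) := by
  intro z hz
  obtain ⟨y, ⟨hyR, hyρ⟩, hzy⟩ := mem_thickening_iff.1 hz
  rw [mem_closedBall] at hyR
  rw [mem_ball, not_lt] at hyρ
  refine ⟨?_, ?_⟩
  · rw [mem_closedBall]; linarith [dist_triangle z y x]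
  · rw [mem_ball, not_lt]; linarith [dist_triangle y z x, dist_comm z y]

theorem card_le_of_isSeparated_annulus {r : ℝ≥0} (hr : 0 < r) (x : E2) (n : ℕ) {S : Finset E2}
    (hS : ↑S ⊆ closedBall x ((n + 1) * r) \ ball x (n * r))
    (hsep : IsSeparated ↑(r / 2) (S : Set E2)) : S.card ≤ 48 * (n + 1) := by
  have hδ : ((r / 2 : ℝ≥0) : ℝ) / 2 = r / 4 := by push_cast; ring
  have hR : max (n * r - r / 4 : ℝ) 0 ≤ (n + 1) * r + r / 4 :=
    max_le (by linarith [r.2]) (by positivity)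
  have hvol := (Finset.card_mul_addHaar_ball_le_addHaar_thickening volume hS hsep).trans
    (measure_mono (thickening_closedBall_diff_ball_subset x _ _ _))
  rw [hδ, addHaar_closedBall_diff_ball volume x hR, Measure.addHaar_ball volume 0 (by positivity),
    ← mul_assoc, ENNReal.mul_le_mul_iff_left (measure_ball_pos volume _ one_pos).ne'
      measure_ball_lt_top.ne, ← ENNReal.ofReal_natCast, ← ENNReal.ofReal_mul (by positivity),
    ENNReal.ofReal_le_ofReal_iff (sub_nonneg.2 (pow_le_pow_left₀ (le_max_right _ _) hR _))]
    at hvol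
  simp only [finrank_euclideanSpace_fin] at hvol
  have hr' : (0 : ℝ) < r := hr
  suffices (S.card : ℝ) ≤ 48 * (n + 1) by exact_mod_cast this
  refine le_of_mul_le_mul_right ?_ (by positivity : (0 : ℝ) < (r / 4) ^ 2)
  rcases max_cases (n * r - r / 4 : ℝ) 0 with ⟨h, -⟩ | ⟨h, h'⟩ <;> rw [h] at hvol
  · nlinarith
  · -- the thickened annulus is a full disc, which forces `n = 0`
    have hn : (n : ℝ) ≤ 1 / 4 := by nlinarith
    nlinarith [(n.cast_nonneg : (0 : ℝ) ≤ n)]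

theorem stmt4_general (r L : ℝ) (hr : 0 < r) (Ω : Set E2)
    (hlip : IsLipDomain r L Ω) (n : ℕ) :
    μH[1] (frontier Ω ∩ (closedBall (0 : E2) ((n + 1) * r) \ ball (0 : E2) (n * r))) ≤
      ENNReal.ofReal (48 * Real.sqrt (1 + L ^ 2) * r * (n + 1)) := by
  lift r to ℝ≥0 using hr.le
  set K := frontier Ω ∩ (closedBall (0 : E2) ((n + 1) * r) \ ball (0 : E2) (n * r))
  have hpack : packingNumber (r / 2) K ≤ (48 * (n + 1) : ℕ) :=
    packingNumber_le_of_forall_finset fun S hSK hS =>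
      card_le_of_isSeparated_annulus hr 0 n (hSK.trans inter_subset_right) hS
  have hlocal : ∀ x ∈ K, μH[1] (K ∩ closedBall x ↑(r / 2)) ≤ ENNReal.ofReal (√(1 + L ^ 2) * r) :=
    fun x hx => calc
      μH[1] (K ∩ closedBall x ↑(r / 2)) ≤ μH[1] (frontier Ω ∩ closedBall x ↑(r / 2)) :=
        measure_mono (inter_subset_inter_left _ inter_subset_left)
      _ ≤ ENNReal.ofReal (2 * √(1 + L ^ 2) * ↑(r / 2)) :=
        hlip.hausdorffMeasure_frontier_inter_closedBall_le hx.1 (r / 2).2 (by push_cast; linarith)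
      _ = ENNReal.ofReal (√(1 + L ^ 2) * r) := by push_cast; ring_nf
  calc μH[1] K ≤ packingNumber (r / 2) K * ENNReal.ofReal (√(1 + L ^ 2) * r) :=
        measure_le_packingNumber_mul _ (ne_top_of_le_ne_top (ENat.natCast_ne_top _) hpack) hlocal
    _ ≤ (48 * (n + 1) : ℕ) * ENNReal.ofReal (√(1 + L ^ 2) * r) := by
        gcongr
        exact_mod_cast hpack
    _ = ENNReal.ofReal (48 * Real.sqrt (1 + L ^ 2) * r * (n + 1)) := by
        rw [← ENNReal.ofReal_natCast, ← ENNReal.ofReal_mul (by positivity)]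
        push_cast; ring_nf

theorem stmt4 (r L : ℝ) (hr : 0 < r) (hL : 0 < L) (Ω : Set E2) (hΩo : IsOpen Ω)
    (hΩb : Bornology.IsBounded Ω) (hlip : IsLipDomain r L Ω) (n : ℕ) :
    μH[1] (frontier Ω ∩ (closedBall (0 : E2) ((n + 1) * r) \ ball (0 : E2) (n * r))) ≤
      ENNReal.ofReal (48 * Real.sqrt (1 + L ^ 2) * r * (n + 1)) :=
  stmt4_general r L hr Ω hlip n
end
end

section
/- Let Ω ⊂ ℝ² be a bounded open set which is Lipschitz with constants r and L, and assume Ω ⊂ B_R with R ≥ 10 r. Then the perimeter of Ω, which equals ℋ¹(∂Ω), satisfies ℋ¹(∂Ω) ≤ C₁(L) R²/r, where one may take C₁(L) = (1/2)(11/9)² · 48 √(1+L²). -/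
open MeasureTheory Metric Set

noncomputable section

/-!
The points of a maximal `r/2`-separated subset of `∂Ω` are centres of disjoint balls of
radius `r/4` inside `B_{R + r/4}`, so comparing areas bounds their number by
`(4R/r + 1)² ≤ (41/10)² R²/r²` (using `R ≥ 10 r`), and the balls `B_r` around them cover `∂Ω`.
In each of these balls the boundary lies on the graph of an `L`-Lipschitz function over an
interval of length `2r`, which has length at most `2r √(1 + L²)`. Summing,
`ℋ¹(∂Ω) ≤ 2 (41/10)² √(1 + L²) R²/r`, and `2 (41/10)² ≤ (1/2) (11/9)² 48`.
-/

open scoped NNReal ENNReal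
open Module

theorem Set.encard_le_coe_of_forall_finset_card_le {α : Type*} {s : Set α} {n : ℕ}
    (h : ∀ t : Finset α, ↑t ⊆ s → t.card ≤ n) : s.encard ≤ n := by
  by_contra! hlt
  obtain ⟨t, hts, ht⟩ := Set.exists_subset_encard_eq (Order.add_one_le_of_lt hlt)
  obtain ⟨t, rfl⟩ := (Set.finite_of_encard_eq_coe ht).exists_finset_coe
  rw [Set.encard_coe_eq_coe_finsetCard] at ht
  have := h t hts
  norm_cast at ht
  omega

section Packing

variable {E : Type*} [NormedAddCommGroup E] [NormedSpace ℝ E] [FiniteDimensional ℝ E]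
  [MeasurableSpace E] [BorelSpace E]

theorem Finset.card_mul_pow_le_of_isSeparated {t : Finset E} {x : E} {ε : ℝ≥0} {R : ℝ}
    (hε : 0 < ε) (hR : 0 ≤ R) (ht : (t : Set E) ⊆ closedBall x R)
    (hsep : IsSeparated ε (t : Set E)) :
    t.card * ((ε : ℝ) / 2) ^ finrank ℝ E ≤ (R + ε / 2) ^ finrank ℝ E := by
  set μ : Measure E := Measure.addHaar
  have hε2 : (0 : ℝ) < ε / 2 := by positivity
  have hdisj : (t : Set E).PairwiseDisjoint (fun y => ball y (ε / 2)) := by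
    intro y hy z hz hyz
    apply ball_disjoint_ball
    have hyz : (ε : ℝ≥0∞) < edist y z := hsep hy hz hyz
    rw [edist_nndist, ENNReal.coe_lt_coe] at hyz
    rw [add_halves]
    exact hyz.le
  have hsub : (⋃ y ∈ t, ball y (ε / 2)) ⊆ ball x (R + ε / 2) :=
    iUnion₂_subset fun y hy => ball_subset_ball' (by linarith [mem_closedBall.1 (ht hy)])
  have hunit_pos : μ (ball 0 1) ≠ 0 := (measure_ball_pos μ _ one_pos).ne'
  have hunit_fin : μ (ball 0 1) ≠ ⊤ := measure_ball_lt_top.ne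
  have hvol : (t.card : ℝ≥0∞) * ENNReal.ofReal ((ε / 2) ^ finrank ℝ E) * μ (ball 0 1)
      ≤ ENNReal.ofReal ((R + ε / 2) ^ finrank ℝ E) * μ (ball 0 1) :=
    calc (t.card : ℝ≥0∞) * ENNReal.ofReal ((ε / 2) ^ finrank ℝ E) * μ (ball 0 1)
        = ∑ y ∈ t, μ (ball y (ε / 2)) := by
          simp only [μ.addHaar_ball_of_pos _ hε2, Finset.sum_const, nsmul_eq_mul, mul_assoc]
      _ = μ (⋃ y ∈ t, ball y (ε / 2)) :=
          (measure_biUnion_finset hdisj fun _ _ => measurableSet_ball).symm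
      _ ≤ μ (ball x (R + ε / 2)) := measure_mono hsub
      _ = ENNReal.ofReal ((R + ε / 2) ^ finrank ℝ E) * μ (ball 0 1) :=
          μ.addHaar_ball_of_pos _ (by positivity)
  rw [ENNReal.mul_le_mul_iff_left hunit_pos hunit_fin, ← ENNReal.ofReal_natCast,
    ← ENNReal.ofReal_mul (by positivity)] at hvol
  exact (ENNReal.ofReal_le_ofReal_iff (by positivity)).1 hvol

theorem exists_finset_isCover_card_mul_pow_le {A : Set E} {x : E} {ε : ℝ≥0} {R : ℝ}
    (hε : 0 < ε) (hR : 0 ≤ R) (hA : A ⊆ closedBall x R) :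
    ∃ t : Finset E, ↑t ⊆ A ∧ IsCover ε A t ∧
      t.card * ((ε : ℝ) / 2) ^ finrank ℝ E ≤ (R + ε / 2) ^ finrank ℝ E := by
  have hpack : packingNumber ε A ≠ ⊤ := by
    refine ne_top_of_le_ne_top (ENat.natCast_ne_top ⌊(R + ε / 2) ^ finrank ℝ E /
      ((ε : ℝ) / 2) ^ finrank ℝ E⌋₊) (iSup₂_le fun C hCA => iSup_le fun hC => ?_)
    refine Set.encard_le_coe_of_forall_finset_card_le fun t htC => Nat.le_floor ?_
    rw [le_div_iff₀ (by positivity)]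
    exact Finset.card_mul_pow_le_of_isSeparated hε hR (htC.trans (hCA.trans hA)) (hC.subset htC)
  have hfin : (maximalSeparatedSet ε A).Finite :=
    Set.encard_ne_top_iff.1 (encard_maximalSeparatedSet hpack ▸ hpack)
  refine ⟨hfin.toFinset, by simpa using maximalSeparatedSet_subset,
    by simpa using isCover_maximalSeparatedSet hpack, ?_⟩
  exact Finset.card_mul_pow_le_of_isSeparated hε hR
    (by simpa using maximalSeparatedSet_subset.trans hA)
    (by simpa using isSeparated_maximalSeparatedSet)

end Packing

theorem frontier_inter_subset_of_forall_mem_iff_lt {X : Type*} [TopologicalSpace X]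
    {s U : Set X} {f g : X → ℝ} (hU : IsOpen U) (hf : Continuous f) (hg : Continuous g)
    (hs : ∀ y ∈ U, y ∈ s ↔ f y < g y) : frontier s ∩ U ⊆ {y | f y = g y} := by
  rw [frontier_eq_closure_inter_closure]
  rintro y ⟨⟨hys, hysc⟩, hyU⟩
  have hle : f y ≤ g y := by
    refine closure_lt_subset_le hf hg (closure_mono ?_ (hU.inter_closure ⟨hyU, hys⟩))
    exact fun z ⟨hzU, hzs⟩ => (hs z hzU).1 hzs
  have hge : g y ≤ f y := by
    refine closure_minimal ?_ (isClosed_le hg hf) (hU.inter_closure ⟨hyU, hysc⟩)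
    exact fun z ⟨hzU, hzs⟩ => not_lt.1 fun h => hzs ((hs z hzU).2 h)
  exact le_antisymm hle hge

theorem LipschitzWith.euclidean_graph {φ : ℝ → ℝ} {K : ℝ≥0} (hφ : LipschitzWith K φ) :
    LipschitzWith (NNReal.sqrt (1 + K ^ 2)) fun t => !₂[t, φ t] := by
  refine LipschitzWith.of_dist_le_mul fun s t => ?_
  have hφst : dist (φ s) (φ t) ≤ K * dist s t := hφ.dist_le_mul s t
  rw [EuclideanSpace.dist_eq, Fin.sum_univ_two]
  simp only [Matrix.cons_val_zero, Matrix.cons_val_one, Real.dist_eq, sq_abs, Real.coe_sqrt,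
    NNReal.coe_add, NNReal.coe_one, NNReal.coe_pow]
  have hsq : (φ s - φ t) ^ 2 ≤ K ^ 2 * (s - t) ^ 2 := by
    rw [← sq_abs, ← sq_abs (s - t), ← mul_pow]
    exact pow_le_pow_left₀ (abs_nonneg _) hφst 2
  rw [← Real.sqrt_sq (abs_nonneg (s - t)), ← Real.sqrt_mul (by positivity), sq_abs]
  exact Real.sqrt_le_sqrt (by linarith)

theorem hausdorffMeasure_euclidean_graph_Icc_le {φ : ℝ → ℝ} {K : ℝ≥0} (hφ : LipschitzWith K φ)
    (a b : ℝ) :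
    μH[1] ((fun t => !₂[t, φ t]) '' Icc a b) ≤
      ENNReal.ofReal (Real.sqrt (1 + K ^ 2) * (b - a)) :=
  calc μH[1] ((fun t => !₂[t, φ t]) '' Icc a b)
      ≤ (NNReal.sqrt (1 + K ^ 2) : ℝ≥0∞) ^ (1 : ℝ) * μH[1] (Icc a b) :=
        hφ.euclidean_graph.hausdorffMeasure_image_le zero_le_one _
    _ = ENNReal.ofReal (Real.sqrt (1 + K ^ 2) * (b - a)) := by
        rw [ENNReal.rpow_one, hausdorffMeasure_real, Real.volume_Icc,
          ENNReal.ofReal_mul (by positivity), ← ENNReal.ofReal_coe_nnreal, Real.coe_sqrt]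
        push_cast
        rfl

theorem hausdorffMeasure_frontier_inter_ball_le {Ω : Set E2} {x : E2} {r : ℝ} {K : ℝ≥0}
    {φ : ℝ → ℝ} (A : E2 ≃ᵢ E2) (hA : A x = 0) (hφ : LipschitzWith K φ)
    (hΩ : ∀ y ∈ ball x r, y ∈ Ω ↔ (A y) 1 < φ ((A y) 0)) :
    μH[1] (frontier Ω ∩ ball x r) ≤ ENNReal.ofReal (Real.sqrt (1 + K ^ 2) * (2 * r)) := by
  have hcoord (i : Fin 2) : Continuous fun y : E2 => A y i :=
    (EuclideanSpace.proj i).continuous.comp A.continuous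
  have hgraph : frontier Ω ∩ ball x r ⊆ A ⁻¹' ((fun t => !₂[t, φ t]) '' Icc (-r) r) := by
    intro y hy
    have hφy : A y 1 = φ (A y 0) := frontier_inter_subset_of_forall_mem_iff_lt isOpen_ball
      (hcoord 1) (hφ.continuous.comp (hcoord 0)) hΩ hy
    have hAy : ‖A y‖ < r := by
      rw [← dist_zero_right, ← hA, A.dist_eq]
      exact hy.2
    refine ⟨A y 0, abs_le.1 ((PiLp.norm_apply_le _ 0).trans hAy.le), ?_⟩
    ext i
    fin_cases i <;> simp [hφy]
  calc μH[1] (frontier Ω ∩ ball x r)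
      ≤ μH[1] (A ⁻¹' ((fun t => !₂[t, φ t]) '' Icc (-r) r)) := measure_mono hgraph
    _ = μH[1] ((fun t => !₂[t, φ t]) '' Icc (-r) r) := A.hausdorffMeasure_preimage 1 _
    _ ≤ ENNReal.ofReal (Real.sqrt (1 + K ^ 2) * (2 * r)) := by
        simpa [two_mul] using hausdorffMeasure_euclidean_graph_Icc_le hφ (-r) r

theorem stmt5_general (r L R : ℝ) (hr : 0 < r) (hR : 10 * r ≤ R)
    (Ω : Set E2) (hΩR : Ω ⊆ ball (0 : E2) R) (hlip : IsLipDomain r L Ω) :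
    μH[1] (frontier Ω) ≤
      ENNReal.ofReal ((1 / 2) * (11 / 9) ^ 2 * 48 * Real.sqrt (1 + L ^ 2) * R ^ 2 / r) := by
  have hFR : frontier Ω ⊆ closedBall 0 R :=
    frontier_subset_closure.trans ((closure_mono hΩR).trans closure_ball_subset_closedBall)
  obtain ⟨T, hTF, hTcov, hTcard⟩ := exists_finset_isCover_card_mul_pow_le
    (ε := (r / 2).toNNReal) (by positivity) (by linarith) hFR
  rw [isCover_iff_subset_iUnion_closedBall] at hTcov
  rw [Real.coe_toNNReal _ (by positivity)] at hTcov hTcard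
  rw [finrank_euclideanSpace_fin] at hTcard
  have hcover : frontier Ω ⊆ ⋃ y ∈ T, frontier Ω ∩ ball y r := fun z hz => by
    obtain ⟨y, hy, hzy⟩ := mem_iUnion₂.1 (hTcov hz)
    exact mem_iUnion₂.2 ⟨y, hy, hz, closedBall_subset_ball (half_lt_self hr) hzy⟩
  have hlocal : ∀ y ∈ T, μH[1] (frontier Ω ∩ ball y r) ≤
      ENNReal.ofReal (Real.sqrt (1 + L ^ 2) * (2 * r)) := fun y hy => by
    obtain ⟨A, φ, hA, hφ, -, hΩ⟩ := hlip y (hTF hy)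
    refine (hausdorffMeasure_frontier_inter_ball_le A hA hφ hΩ).trans (ENNReal.ofReal_le_ofReal ?_)
    gcongr √(1 + ?_) * _
    rw [Real.coe_toNNReal', sq_le_sq, abs_of_nonneg (le_max_right _ _)]
    exact max_le (le_abs_self L) (abs_nonneg L)
  have hcard : (T.card : ℝ) * r ^ 2 ≤ (41 / 10) ^ 2 * R ^ 2 := by nlinarith
  calc μH[1] (frontier Ω) ≤ ∑ y ∈ T, μH[1] (frontier Ω ∩ ball y r) :=
        (measure_mono hcover).trans (measure_biUnion_finset_le _ _)
    _ ≤ T.card • ENNReal.ofReal (Real.sqrt (1 + L ^ 2) * (2 * r)) :=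
        Finset.sum_le_card_nsmul _ _ _ hlocal
    _ ≤ _ := by
        rw [nsmul_eq_mul, ← ENNReal.ofReal_natCast, ← ENNReal.ofReal_mul (by positivity)]
        refine ENNReal.ofReal_le_ofReal ?_
        rw [le_div_iff₀ hr]
        nlinarith [Real.sqrt_nonneg (1 + L ^ 2)]

theorem stmt5 (r L R : ℝ) (hr : 0 < r) (hL : 0 < L) (hR : 10 * r ≤ R)
    (Ω : Set E2) (hΩo : IsOpen Ω) (hΩb : Bornology.IsBounded Ω)
    (hΩR : Ω ⊆ ball (0 : E2) R) (hlip : IsLipDomain r L Ω) :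
    μH[1] (frontier Ω) ≤
      ENNReal.ofReal ((1 / 2) * (11 / 9) ^ 2 * 48 * Real.sqrt (1 + L ^ 2) * R ^ 2 / r) :=
  stmt5_general r L R hr hR Ω hΩR hlip
end
end

section
/- Let Ω ⊂ ℝ² be a bounded open set which is Lipschitz with constants r and L. Then there exist constants c₂ ∈ (0,1] and C₁ > 0, depending on L only, such that for every d with 0 < d ≤ c₂ r, the Lebesgue measure of the closed d-neighborhood of the boundary satisfies |B̄_d(∂Ω)| ≤ C₁ ℋ¹(∂Ω) d. -/
open MeasureTheory Metric Set

noncomputable section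

/-!
In the chart at a boundary point `x`, the graph of the `L`-Lipschitz function over
`|t| < d / √(1 + L²)` lies in `∂Ω ∩ B_d(x)`, and projecting onto the first chart axis is
`1`-Lipschitz, so `ℋ¹(∂Ω ∩ B_d(x)) ≥ 2d / √(1 + L²)`. A Vitali subfamily of disjoint balls
`B_d(x)`, `x ∈ ∂Ω`, whose fourfold enlargements cover `B̄_d(∂Ω)` then gives
`|B̄_d(∂Ω)| ≤ 16πd² · #family ≤ 8π √(1 + L²) d ℋ¹(∂Ω)`, for every `d ≤ r`.
-/

open scoped NNReal ENNReal Topology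

section Covering

variable {α : Type*} [PseudoMetricSpace α] [ProperSpace α] [MeasurableSpace α]
  [OpensMeasurableSpace α] {μ ν : Measure α} {S : Set α} {d : ℝ} {m C : ℝ≥0∞}

theorem measure_cthickening_le_of_le_measure_inter_ball (hS : IsClosed S) (hd : 0 < d)
    (hν : ∀ x ∈ S, m ≤ ν (S ∩ ball x d)) (hμ : ∀ x, μ (closedBall x (4 * d)) ≤ C * m) :
    μ (cthickening d S) ≤ C * ν S := by
  obtain ⟨u, huS, hu_disj, hu_cover⟩ :=
    Vitali.exists_disjoint_subfamily_covering_enlargement_closedBall S id (fun _ => d) d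
      (fun _ _ => le_rfl) 4 (by norm_num)
  have hu_count : u.Countable := hu_disj.countable_of_nonempty_interior fun b _ =>
    ⟨b, ball_subset_interior_closedBall (mem_ball_self hd)⟩
  have hcover : cthickening d S ⊆ ⋃ b ∈ u, closedBall b (4 * d) := by
    rw [cthickening_eq_biUnion_closedBall S hd.le, hS.closure_eq]
    refine iUnion₂_subset fun a ha => ?_
    obtain ⟨b, hb, hab⟩ := hu_cover a ha
    exact hab.trans (subset_biUnion_of_mem (u := fun b => closedBall b (4 * d)) hb)
  have hpieces_disj : u.PairwiseDisjoint fun b => S ∩ ball b d :=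
    hu_disj.mono fun b => inter_subset_right.trans ball_subset_closedBall
  calc μ (cthickening d S)
      ≤ ∑' b : u, μ (closedBall (b : α) (4 * d)) :=
        (measure_mono hcover).trans (measure_biUnion_le _ hu_count _)
    _ ≤ ∑' _ : u, C * m := ENNReal.tsum_le_tsum fun b => hμ b
    _ = C * ∑' _ : u, m := ENNReal.tsum_mul_left
    _ ≤ C * ∑' b : u, ν (S ∩ ball (b : α) d) := by
        gcongr with b
        exact hν b (huS b.2)
    _ = C * ν (⋃ b ∈ u, S ∩ ball b d) := by
        rw [measure_biUnion hu_count hpieces_disj fun b _ =>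
          hS.measurableSet.inter measurableSet_ball]
    _ ≤ C * ν S := by
        gcongr
        exact iUnion₂_subset fun _ _ => inter_subset_left

end Covering

section LipschitzChart

lemma norm_graph_le {K : ℝ≥0} {φ : ℝ → ℝ} (hφ : LipschitzWith K φ) (hφ0 : φ 0 = 0) (t : ℝ) :
    ‖!₂[t, φ t]‖ ≤ √(1 + K ^ 2) * |t| := by
  have hφt : |φ t| ≤ K * |t| := by simpa [hφ0, Real.dist_eq] using hφ.dist_le_mul t 0
  rw [EuclideanSpace.norm_eq, ← Real.sqrt_sq_eq_abs t, ← Real.sqrt_mul (by positivity)]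
  apply Real.sqrt_le_sqrt
  simp only [Fin.sum_univ_two, Real.norm_eq_abs, sq_abs,
    Matrix.cons_val_zero, Matrix.cons_val_one]
  nlinarith [abs_nonneg (φ t), sq_abs (φ t), sq_abs t, mul_nonneg K.2 (abs_nonneg t)]

variable {Ω : Set E2} {x : E2} {r : ℝ} {A : E2 ≃ᵢ E2} {φ : ℝ → ℝ}

lemma chart_graph_mem_frontier (hΩ : IsOpen Ω)
    (hA : ∀ y ∈ ball x r, y ∈ Ω ↔ A y 1 < φ (A y 0)) {t : ℝ}
    (ht : A.symm !₂[t, φ t] ∈ ball x r) : A.symm !₂[t, φ t] ∈ frontier Ω := by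
  rw [hΩ.frontier_eq]
  refine ⟨?_, fun hp => by simpa using (hA _ ht).1 hp⟩
  let q : ℝ → E2 := fun δ => A.symm (!₂[t, φ t] - δ • EuclideanSpace.single 1 1)
  have hq : Filter.Tendsto q (𝓝[>] 0) (𝓝 (A.symm !₂[t, φ t])) := by
    refine tendsto_nhdsWithin_of_tendsto_nhds ?_
    have : Continuous q := by fun_prop
    simpa [q] using this.tendsto 0
  refine mem_closure_of_tendsto hq ?_
  filter_upwards [self_mem_nhdsWithin, hq (isOpen_ball.mem_nhds ht)] with δ hδ hδr
  refine (hA _ hδr).2 ?_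
  simpa [q] using hδ

lemma ofReal_le_hausdorffMeasure_frontier_inter_ball (hΩ : IsOpen Ω) {K : ℝ≥0}
    (hφ : LipschitzWith K φ) (hφ0 : φ 0 = 0) (hAx : A x = 0)
    (hA : ∀ y ∈ ball x r, y ∈ Ω ↔ A y 1 < φ (A y 0)) {d : ℝ} (hdr : d ≤ r) :
    ENNReal.ofReal (2 * (d / √(1 + K ^ 2))) ≤ μH[1] (frontier Ω ∩ ball x d) := by
  set s := d / √(1 + K ^ 2)
  have hK : 0 < √(1 + K ^ 2) := by positivity
  have hgraph : ∀ t ∈ Ioo (-s) s, A.symm !₂[t, φ t] ∈ frontier Ω ∩ ball x d := by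
    intro t ht
    have hdist : dist (A.symm !₂[t, φ t]) x < d :=
      calc dist (A.symm !₂[t, φ t]) x = ‖!₂[t, φ t]‖ := by
            rw [← A.dist_eq, A.apply_symm_apply, hAx, dist_zero_right]
        _ ≤ √(1 + K ^ 2) * |t| := norm_graph_le hφ hφ0 t
        _ < √(1 + K ^ 2) * s := by gcongr; exact abs_lt.2 ht
        _ = d := mul_div_cancel₀ d hK.ne'
    exact ⟨chart_graph_mem_frontier hΩ hA (hdist.trans_le hdr), hdist⟩
  have hcoord : LipschitzWith 1 fun y : E2 => y 0 :=
    LipschitzWith.of_dist_le_mul fun y z => by simpa using PiLp.dist_apply_le y z 0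
  have hproj : LipschitzWith 1 fun y : E2 => A y 0 := by
    simpa [Function.comp_def] using hcoord.comp A.isometry.lipschitz
  calc ENNReal.ofReal (2 * s) = μH[1] (Ioo (-s) s) := by
        rw [hausdorffMeasure_real, Real.volume_Ioo]; ring_nf
    _ ≤ μH[1] ((fun y : E2 => A y 0) '' (frontier Ω ∩ ball x d)) :=
        measure_mono fun t ht => ⟨_, hgraph t ht, by simp⟩
    _ ≤ μH[1] (frontier Ω ∩ ball x d) := by
        simpa using hproj.hausdorffMeasure_image_le zero_le_one (frontier Ω ∩ ball x d)

end LipschitzChart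

theorem stmt6_general (L : ℝ) :
    ∃ c₂ C₁ : ℝ, 0 < c₂ ∧ c₂ ≤ 1 ∧ 0 < C₁ ∧
      ∀ r : ℝ, 0 < r →
      ∀ Ω : Set E2, IsOpen Ω → Bornology.IsBounded Ω → IsLipDomain r L Ω →
      ∀ d : ℝ, 0 < d → d ≤ c₂ * r →
        volume (cthickening d (frontier Ω)) ≤
          ENNReal.ofReal C₁ * μH[1] (frontier Ω) * ENNReal.ofReal d := by
  set K := √(1 + (L.toNNReal : ℝ) ^ 2)
  have hK : 0 < K := by positivity
  refine ⟨1, 8 * Real.pi * K, one_pos, le_rfl, by positivity, ?_⟩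
  intro r _ Ω hΩ _ hlip d hd hdr
  have hlength : ∀ x ∈ frontier Ω,
      ENNReal.ofReal (2 * (d / K)) ≤ μH[1] (frontier Ω ∩ ball x d) := fun x hx => by
    obtain ⟨A, φ, hAx, hφ, hφ0, hA⟩ := hlip x hx
    exact ofReal_le_hausdorffMeasure_frontier_inter_ball hΩ hφ hφ0 hAx hA (by linarith)
  have hvolume : ∀ x : E2, volume (closedBall x (4 * d)) ≤
      ENNReal.ofReal (8 * Real.pi * K) * ENNReal.ofReal d * ENNReal.ofReal (2 * (d / K)) := by
    intro x
    rw [EuclideanSpace.volume_closedBall_fin_two, ← ENNReal.ofReal_pow (by positivity),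
      ← ENNReal.ofReal_mul (by positivity), ← ENNReal.ofReal_mul (by positivity),
      ← ENNReal.ofReal_mul (by positivity)]
    refine le_of_eq (congrArg ENNReal.ofReal ?_)
    field_simp
    ring
  rw [mul_right_comm]
  exact measure_cthickening_le_of_le_measure_inter_ball isClosed_frontier hd hlength hvolume

theorem stmt6 (L : ℝ) (hL : 0 < L) :
    ∃ c₂ C₁ : ℝ, 0 < c₂ ∧ c₂ ≤ 1 ∧ 0 < C₁ ∧
      ∀ r : ℝ, 0 < r →
      ∀ Ω : Set E2, IsOpen Ω → Bornology.IsBounded Ω → IsLipDomain r L Ω →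
      ∀ d : ℝ, 0 < d → d ≤ c₂ * r →
        volume (cthickening d (frontier Ω)) ≤
          ENNReal.ofReal C₁ * μH[1] (frontier Ω) * ENNReal.ofReal d :=
  stmt6_general L
end
end

section
/- Fix positive constants r, L, R. There exists a constant c₃ ∈ (0, π], depending on L only, such that for any two bounded open sets Ω₁, Ω₂ ⊂ B_R which are Lipschitz with constants r and L, denoting d₁ = d_H(Ω̄₁, Ω̄₂) and d₂ = |Ω₁ Δ Ω₂|, one has d₂ ≥ c₃ min{r², d₁²}. In particular, with C₃ = c₃^{−1/2}: if d₂ ≤ (c₃/2) r² then d₁ ≤ C₃ d₂^{1/2}, and if d₂ ≥ (c₃/2) r² then d₁ ≤ (2√2 C₃/r) R d₂^{1/2}. -/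
open MeasureTheory Metric Set

noncomputable section

/-! If a point `x ∈ closure Ω₁` is at distance `δ` from `Ω₂`, then `Ω₁ \ Ω₂` contains a ball of
radius `min r δ / (4 (1 + L))`: either `Ω₁` contains a ball around `x`, or some boundary point `z`
is close to `x`, and in the Lipschitz chart at `z` the ball centred at depth `ρ / 2` below `z` with
radius `ρ / (2 (1 + L))` lies under the graph. Its area gives the lower bound with
`c₃ = π / (16 (1 + L) ^ 2)` after letting `δ` increase to the Hausdorff distance. The two upper
bounds are then algebra, the second one using `d_H ≤ diam (ball 0 R) ≤ 2 R`. -/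

open scoped NNReal

theorem IsPreconnected.inter_frontier_nonempty {X : Type*} [TopologicalSpace X] {s u : Set X}
    (hs : IsPreconnected s) (hu : IsOpen u) (hsu : (s ∩ u).Nonempty) (hsub : ¬ s ⊆ u) :
    (s ∩ frontier u).Nonempty := by
  by_contra hempty
  refine hsub (hs.subset_of_closure_inter_subset hu hsu fun y ⟨hyc, hys⟩ => ?_)
  by_contra hyu
  exact hempty ⟨y, hys, hyc, fun hyi => hyu (interior_subset hyi)⟩

theorem Metric.exists_disjoint_ball_of_lt_hausdorffDist {X : Type*} [PseudoMetricSpace X]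
    {s t : Set X} {δ : ℝ} (hδ : 0 ≤ δ) (h : δ < hausdorffDist s t) :
    (∃ x ∈ s, Disjoint (ball x δ) t) ∨ ∃ x ∈ t, Disjoint (ball x δ) s := by
  have of_lt_infDist {x : X} {u : Set X} (hx : δ < infDist x u) : Disjoint (ball x δ) u :=
    disjoint_ball_infDist.mono_left (ball_subset_ball hx.le)
  by_contra! H
  refine h.not_ge (hausdorffDist_le_of_infDist hδ (fun x hx => ?_) fun x hx => ?_)
  · exact not_lt.1 fun hlt => H.1 x hx (of_lt_infDist hlt)
  · exact not_lt.1 fun hlt => H.2 x hx (of_lt_infDist hlt)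

theorem Metric.hausdorffDist_le_two_mul {X : Type*} [PseudoMetricSpace X] {s t : Set X} {x : X}
    {R : ℝ} (hs : s.Nonempty) (ht : t.Nonempty) (hsR : s ⊆ ball x R) (htR : t ⊆ ball x R) :
    hausdorffDist s t ≤ 2 * R := by
  have hR : 0 ≤ R := (dist_nonneg.trans_lt (hsR hs.some_mem)).le
  calc hausdorffDist s t ≤ diam (s ∪ t) :=
        hausdorffDist_le_diam hs (isBounded_ball.subset hsR) ht (isBounded_ball.subset htR)
    _ ≤ diam (ball x R) := diam_mono (union_subset hsR htR) isBounded_ball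
    _ ≤ 2 * R := diam_ball hR

theorem ball_subset_setOf_lt_of_lipschitzWith {φ : ℝ → ℝ} {K : ℝ≥0} (hφ : LipschitzWith K φ)
    (hφ0 : φ 0 = 0) {h s : ℝ} (hs : (1 + K) * s ≤ h) :
    ball (!₂[0, -h] : E2) s ⊆ {w | w 1 < φ (w 0)} := by
  intro w hw
  have hw0 : |w 0| < s := by
    simpa [Real.dist_eq] using (PiLp.dist_apply_le w !₂[0, -h] 0).trans_lt hw
  have hw1 : |w 1 + h| < s := by
    simpa [Real.dist_eq] using (PiLp.dist_apply_le w !₂[0, -h] 1).trans_lt hw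
  have hφw : -(K * |w 0|) ≤ φ (w 0) := by
    have := hφ.dist_le_mul (w 0) 0
    rw [Real.dist_eq, Real.dist_eq, hφ0, sub_zero, sub_zero] at this
    linarith [(abs_le.1 this).1]
  have hKw : (K : ℝ) * |w 0| ≤ K * s := mul_le_mul_of_nonneg_left hw0.le K.2
  show w 1 < φ (w 0)
  linarith [(abs_lt.1 hw1).2]

theorem norm_vec_zero_neg {h : ℝ} (hh : 0 ≤ h) : ‖(!₂[0, -h] : E2)‖ = h := by
  simp [EuclideanSpace.norm_eq, hh]

namespace IsLipDomain

variable {r L : ℝ} {Ω : Set E2}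

theorem exists_ball_subset_of_mem_frontier (hΩ : IsLipDomain r L Ω) (hL : 0 ≤ L) {z : E2}
    (hz : z ∈ frontier Ω) {ρ : ℝ} (hρ : 0 < ρ) (hρr : ρ ≤ r) :
    ∃ c, ball c (ρ / (2 * (1 + L))) ⊆ Ω ∩ ball z ρ := by
  obtain ⟨A, φ, hAz, hφ, hφ0, hchart⟩ := hΩ z hz
  set s := ρ / (2 * (1 + L)) with hs_def
  have hs : (1 + L) * s = ρ / 2 := by rw [hs_def]; field_simp
  have hsρ : s ≤ ρ / 2 := div_le_div_of_nonneg_left hρ.le two_pos (by linarith)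
  have hball : ball (!₂[0, -(ρ / 2)] : E2) s ⊆ {w | w 1 < φ (w 0)} ∩ ball 0 ρ := by
    refine subset_inter (ball_subset_setOf_lt_of_lipschitzWith hφ hφ0 ?_) (ball_subset_ball' ?_)
    · rw [Real.coe_toNNReal L hL, hs]
    · rw [dist_zero_right, norm_vec_zero_neg (by positivity)]
      linarith
  refine ⟨A.symm !₂[0, -(ρ / 2)], fun y hy => ?_⟩
  rw [← A.preimage_ball] at hy
  have hyz : y ∈ ball z ρ := by
    rw [mem_ball, ← A.dist_eq, hAz]
    exact (hball hy).2
  exact ⟨(hchart y (ball_subset_ball hρr hyz)).2 (hball hy).1, hyz⟩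

theorem exists_ball_subset_inter_ball (hΩ : IsLipDomain r L Ω) (ho : IsOpen Ω) (hL : 0 ≤ L)
    {x : E2} (hx : x ∈ closure Ω) {ρ : ℝ} (hρ : 0 < ρ) (hρr : ρ ≤ r) :
    ∃ c, ball c (ρ / (2 * (1 + L))) ⊆ Ω ∩ ball x (2 * ρ) := by
  have hsρ : ρ / (2 * (1 + L)) ≤ ρ := div_le_self hρ.le (by linarith)
  by_cases hsub : ball x ρ ⊆ Ω
  · refine ⟨x, subset_inter ((ball_subset_ball hsρ).trans hsub) (ball_subset_ball (by linarith))⟩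
  obtain ⟨z, hzx, hz⟩ := (convex_ball x ρ).isPreconnected.inter_frontier_nonempty ho
    (mem_closure_iff_nhds.1 hx _ (ball_mem_nhds x hρ)) hsub
  obtain ⟨c, hc⟩ := hΩ.exists_ball_subset_of_mem_frontier hL hz hρ hρr
  refine ⟨c, hc.trans (inter_subset_inter_right _ fun y hy => ?_)⟩
  calc dist y x ≤ dist y z + dist z x := dist_triangle y z x
    _ < 2 * ρ := by linarith [mem_ball.1 hy, mem_ball.1 hzx]

theorem ofReal_le_volume_diff (hΩ : IsLipDomain r L Ω) (ho : IsOpen Ω) (hL : 0 ≤ L) (hr : 0 < r)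
    {x : E2} (hx : x ∈ closure Ω) {δ : ℝ} (hδ : 0 < δ) {Ω' : Set E2}
    (hdisj : Disjoint (ball x δ) Ω') :
    ENNReal.ofReal (Real.pi / (16 * (1 + L) ^ 2) * min r δ ^ 2) ≤ volume (Ω \ Ω') := by
  have hm : 0 < min r δ := lt_min hr hδ
  obtain ⟨c, hc⟩ := hΩ.exists_ball_subset_inter_ball ho hL hx (half_pos hm)
    ((half_le_self hm.le).trans (min_le_left r δ))
  have hcΩ : ball c (min r δ / (4 * (1 + L))) ⊆ Ω \ Ω' := by
    rw [show min r δ / (4 * (1 + L)) = min r δ / 2 / (2 * (1 + L)) by rw [div_div]; ring_nf]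
    refine fun y hy => ⟨(hc hy).1, fun hyΩ' => hdisj.notMem_of_mem_left ?_ hyΩ'⟩
    exact ball_subset_ball (by linarith [min_le_right r δ]) (hc hy).2
  calc ENNReal.ofReal (Real.pi / (16 * (1 + L) ^ 2) * min r δ ^ 2)
      = volume (ball c (min r δ / (4 * (1 + L)))) := by
        rw [EuclideanSpace.volume_ball_fin_two, ← ENNReal.ofReal_pow (by positivity),
          ← ENNReal.ofReal_mul (by positivity)]
        congr 1
        field_simp
        ring
    _ ≤ volume (Ω \ Ω') := measure_mono hcΩ

theorem mul_min_sq_hausdorffDist_le {Ω₁ Ω₂ : Set E2} (hr : 0 < r)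
    (hL : 0 ≤ L) (ho₁ : IsOpen Ω₁) (ho₂ : IsOpen Ω₂) (hΩ₁ : IsLipDomain r L Ω₁)
    (hΩ₂ : IsLipDomain r L Ω₂) (hfin : volume (symmDiff Ω₁ Ω₂) ≠ ⊤) :
    Real.pi / (16 * (1 + L) ^ 2) * min (r ^ 2) (hausdorffDist (closure Ω₁) (closure Ω₂) ^ 2) ≤
      (volume (symmDiff Ω₁ Ω₂)).toReal := by
  set c := Real.pi / (16 * (1 + L) ^ 2)
  set d := hausdorffDist (closure Ω₁) (closure Ω₂)
  have hsq {t : ℝ} (ht : 0 ≤ t) : min (r ^ 2) (t ^ 2) = min r t ^ 2 := by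
    rcases le_total r t with h | h
    · rw [min_eq_left h, min_eq_left (pow_le_pow_left₀ hr.le h 2)]
    · rw [min_eq_right h, min_eq_right (pow_le_pow_left₀ ht h 2)]
  have below_d : ∀ δ ∈ Ioo 0 d, c * min (r ^ 2) (δ ^ 2) ≤ (volume (symmDiff Ω₁ Ω₂)).toReal := by
    rintro δ ⟨hδ, hδd⟩
    rw [hsq hδ.le, ← ENNReal.ofReal_le_iff_le_toReal hfin]
    rcases exists_disjoint_ball_of_lt_hausdorffDist hδ.le hδd with ⟨x, hx, hdisj⟩ | ⟨x, hx, hdisj⟩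
    · exact (hΩ₁.ofReal_le_volume_diff ho₁ hL hr hx hδ (hdisj.mono_right subset_closure)).trans
        (measure_mono le_sup_left)
    · exact (hΩ₂.ofReal_le_volume_diff ho₂ hL hr hx hδ (hdisj.mono_right subset_closure)).trans
        (measure_mono le_sup_right)
  rcases (hausdorffDist_nonneg : 0 ≤ d).eq_or_lt with hd | hd
  · simp [show d = 0 from hd.symm, sq_nonneg]
  have hcont : Continuous fun t : ℝ => c * min (r ^ 2) (t ^ 2) := by fun_prop
  exact le_of_tendsto (hcont.tendsto d |>.mono_left nhdsWithin_le_nhds)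
    (Filter.eventually_of_mem (Ioo_mem_nhdsLT hd) below_d)

end IsLipDomain

theorem Real.rpow_neg_half_mul_rpow_half {c : ℝ} (hc : 0 ≤ c) (V : ℝ) :
    c ^ (-(1 / 2 : ℝ)) * V ^ (1 / 2 : ℝ) = √(V / c) := by
  rw [Real.rpow_neg hc, ← Real.sqrt_eq_rpow, ← Real.sqrt_eq_rpow, Real.sqrt_div' V hc,
    inv_mul_eq_div]

theorem le_sqrt_div_of_mul_min_sq_le {c r d V : ℝ} (hc : 0 < c) (hr : 0 < r)
    (h : c * min (r ^ 2) (d ^ 2) ≤ V) (hV : V ≤ c / 2 * r ^ 2) : d ≤ √(V / c) := by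
  have hdr : d ^ 2 ≤ r ^ 2 := by
    by_contra! hrd
    rw [min_eq_left hrd.le] at h
    nlinarith [mul_pos hc (pow_pos hr 2)]
  rw [min_eq_right hdr] at h
  exact Real.le_sqrt_of_sq_le ((le_div_iff₀ hc).2 (by linarith))

theorem le_sqrt_two_mul_sqrt_div {c r V : ℝ} (hc : 0 < c) (h : c / 2 * r ^ 2 ≤ V) :
    r ≤ √2 * √(V / c) := by
  rw [← Real.sqrt_mul zero_le_two]
  refine Real.le_sqrt_of_sq_le ?_
  rw [mul_div_assoc', le_div_iff₀ hc]
  linarith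

theorem stmt8 (L : ℝ) (hL : 0 < L) :
    ∃ c₃ : ℝ, 0 < c₃ ∧ c₃ ≤ Real.pi ∧
      ∀ r R : ℝ, 0 < r → 0 < R →
      ∀ Ω₁ Ω₂ : Set E2, IsOpen Ω₁ → IsOpen Ω₂ → Ω₁.Nonempty → Ω₂.Nonempty →
        Ω₁ ⊆ ball (0 : E2) R → Ω₂ ⊆ ball (0 : E2) R →
        IsLipDomain r L Ω₁ → IsLipDomain r L Ω₂ →
        c₃ * min (r ^ 2) (hausdorffDist (closure Ω₁) (closure Ω₂) ^ 2) ≤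
            (volume (symmDiff Ω₁ Ω₂)).toReal ∧
        ((volume (symmDiff Ω₁ Ω₂)).toReal ≤ c₃ / 2 * r ^ 2 →
          hausdorffDist (closure Ω₁) (closure Ω₂) ≤
            c₃ ^ (-(1 / 2 : ℝ)) * (volume (symmDiff Ω₁ Ω₂)).toReal ^ (1 / 2 : ℝ)) ∧
        (c₃ / 2 * r ^ 2 ≤ (volume (symmDiff Ω₁ Ω₂)).toReal →
          hausdorffDist (closure Ω₁) (closure Ω₂) ≤
            2 * Real.sqrt 2 * c₃ ^ (-(1 / 2 : ℝ)) / r * R *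
              (volume (symmDiff Ω₁ Ω₂)).toReal ^ (1 / 2 : ℝ)) := by
  set c₃ := Real.pi / (16 * (1 + L) ^ 2)
  have hc₃ : 0 < c₃ := by positivity
  refine ⟨c₃, hc₃, div_le_self Real.pi_nonneg (by nlinarith), fun r R hr hR Ω₁ Ω₂ ho₁ ho₂ hne₁
    hne₂ hR₁ hR₂ hΩ₁ hΩ₂ => ?_⟩
  have hfin : volume (symmDiff Ω₁ Ω₂) ≠ ⊤ :=
    (measure_mono (symmDiff_subset_union.trans (union_subset hR₁ hR₂))).trans_lt
      measure_ball_lt_top |>.ne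
  have hlower := hΩ₁.mul_min_sq_hausdorffDist_le hr hL.le ho₁ ho₂ hΩ₂ hfin
  set V := (volume (symmDiff Ω₁ Ω₂)).toReal
  refine ⟨hlower, fun hsmall => ?_, fun hbig => ?_⟩
  · rw [Real.rpow_neg_half_mul_rpow_half hc₃.le]
    exact le_sqrt_div_of_mul_min_sq_le hc₃ hr hlower hsmall
  calc hausdorffDist (closure Ω₁) (closure Ω₂) ≤ 2 * R := by
        rw [hausdorffDist_closure]
        exact hausdorffDist_le_two_mul hne₁ hne₂ hR₁ hR₂
    _ ≤ 2 * R * (√2 * √(V / c₃) / r) := le_mul_of_one_le_right (by positivity)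
        ((one_le_div hr).2 (le_sqrt_two_mul_sqrt_div hc₃ hbig))
    _ = _ := by rw [← Real.rpow_neg_half_mul_rpow_half hc₃.le]; ring
end
end
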